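/- Fidelity ordering lemma: let ρ and σ be positive semidefinite n×n matrices with eigenvalues r_1 ≥ … ≥ r_n and s_1 ≥ … ≥ s_n respectively. Then ‖√ρ√σ‖₁ ≤ Σ_i √(r_i s_i). Moreover, if σ = Σ_i s_i|i⟩⟨i| and ρ̃ := Σ_i r_i|i⟩⟨i| (same eigenbasis, eigenvalues matched in non-increasing order), equality ‖√ρ̃√σ‖₁ = Σ_i √(r_i s_i) holds. -/

import Mathlib

/-!
Write `ρ = U diag(r) Uᴴ`, `σ = V diag(s) Vᴴ` with `U`, `V` unitary and put `A = √ρ √σ`.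
Diagonalising `A Aᴴ` gives a partial isometry `C` with `√(A Aᴴ) = A C`, hence
`‖A‖₁ = Re tr (diag(√r) X diag(√s) Y)` for the partial isometries `X = Uᴴ V`, `Y = Vᴴ C U`.
As `Re (X i j * Y j i) ≤ (|X i j|² + |Y j i|²) / 2` and the rows and columns of a partial
isometry have norm at most `1`, it remains to show `∑ a i * b j * D i j ≤ ∑ a i * b i` for
non-increasing non-negative `a`, `b` and doubly substochastic `D`. The prefix sums of
`i ↦ ∑ j, D i j * b j` are dominated by those of `b` (a bathtub argument), and Abel summation
against the non-increasing `a` concludes. For `ρ̃`, the product `√ρ̃ √σ = V diag(√(r s)) Vᴴ` is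
positive semidefinite, so its trace norm is its trace.
-/

open Matrix
open scoped ComplexOrder Classical

noncomputable section

/-- PSD square root (junk value 0 if not PSD). -/
def psdSqrt {n : Type*} [Fintype n] [DecidableEq n] (A : Matrix n n ℂ) : Matrix n n ℂ :=
  if h : A.PosSemidef then
    h.1.eigenvectorUnitary.1 * diagonal ((↑) ∘ (√·) ∘ h.1.eigenvalues) *
      (star h.1.eigenvectorUnitary : Matrix n n ℂ)
  else 0

/-- trace norm `‖A‖₁ = tr √(A Aᴴ)`. -/
def trNorm {n : Type*} [Fintype n] [DecidableEq n] (A : Matrix n n ℂ) : ℝ :=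
  ((psdSqrt (A * A.conjTranspose)).trace).re

section Rearrangement

open Finset

variable {ι : Type*} [LinearOrder ι]

theorem Finset.sum_mul_nonneg_of_antitone (s : Finset ι) {d : ι → ℝ}
    (hd : ∀ p ∈ s, 0 ≤ ∑ i ∈ s with i ≤ p, d i) {a : ι → ℝ} (ha : Antitone a)
    (ha0 : ∀ i ∈ s, 0 ≤ a i) : 0 ≤ ∑ i ∈ s, a i * d i := by
  induction s using induction_on_max generalizing a with
  | empty => simp
  | insert m t hlt ih =>
    have hm : m ∉ t := fun h => lt_irrefl m (hlt m h)
    have htotal : 0 ≤ d m + ∑ i ∈ t, d i := by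
      have h := hd m (mem_insert_self m t)
      rwa [filter_true_of_mem fun i hi => ?_, sum_insert hm] at h
      rcases mem_insert.mp hi with rfl | hi
      exacts [le_rfl, (hlt i hi).le]
    have hprefix : ∀ p ∈ t, 0 ≤ ∑ i ∈ t with i ≤ p, d i := fun p hp => by
      have h := hd p (mem_insert_of_mem hp)
      rwa [filter_insert, if_neg (hlt p hp).not_ge] at h
    have hshift : 0 ≤ ∑ i ∈ t, (a i - a m) * d i :=
      ih hprefix (fun i j hij => sub_le_sub_right (ha hij) _)
        fun i hi => sub_nonneg.mpr (ha (hlt i hi).le)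
    calc (0 : ℝ) ≤ a m * (d m + ∑ i ∈ t, d i) + ∑ i ∈ t, (a i - a m) * d i :=
          add_nonneg (mul_nonneg (ha0 m (mem_insert_self m t)) htotal) hshift
      _ = ∑ i ∈ insert m t, a i * d i := by
          rw [sum_insert hm]
          simp only [sub_mul, sum_sub_distrib, mul_add, mul_sum]
          ring

variable [Fintype ι]

theorem sum_mul_le_sum_mul_of_prefix_sums_le {a b c : ι → ℝ} (ha : Antitone a)
    (ha0 : ∀ i, 0 ≤ a i) (hcb : ∀ p, ∑ i with i ≤ p, c i ≤ ∑ i with i ≤ p, b i) :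
    ∑ i, a i * c i ≤ ∑ i, a i * b i := by
  have := univ.sum_mul_nonneg_of_antitone (d := b - c)
    (fun p _ => by simpa [sum_sub_distrib] using hcb p) ha fun i _ => ha0 i
  simpa [mul_sub, sum_sub_distrib] using this

theorem sum_mul_le_sum_filter_le {b e : ι → ℝ} (hb : Antitone b) (p : ι) (hbp : 0 ≤ b p)
    (he0 : ∀ j, 0 ≤ e j) (he1 : ∀ j, e j ≤ 1) (hsum : ∑ j, e j ≤ #{j | j ≤ p}) :
    ∑ j, b j * e j ≤ ∑ j with j ≤ p, b j := by
  have hterm : ∀ j,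
      b j * (e j - if j ≤ p then 1 else 0) ≤ b p * (e j - if j ≤ p then 1 else 0) := by
    intro j
    split_ifs with hjp
    · exact mul_le_mul_of_nonpos_right (hb hjp) (by linarith [he1 j])
    · exact mul_le_mul_of_nonneg_right (hb (not_le.mp hjp).le) (by linarith [he0 j])
  have hcount : ∑ j, (e j - if j ≤ p then (1 : ℝ) else 0) ≤ 0 := by
    simpa [sum_sub_distrib, sum_boole] using hsum
  have key : ∑ j, b j * (e j - if j ≤ p then 1 else 0) ≤ 0 :=
    calc _ ≤ ∑ j, b p * (e j - if j ≤ p then 1 else 0) := sum_le_sum fun j _ => hterm j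
      _ ≤ 0 := by rw [← mul_sum]; exact mul_nonpos_of_nonneg_of_nonpos hbp hcount
  simpa [mul_sub, sum_sub_distrib, sum_filter] using key

theorem sum_sum_mul_mul_le_sum_mul {a b : ι → ℝ} {D : ι → ι → ℝ} (ha : Antitone a)
    (ha0 : ∀ i, 0 ≤ a i) (hb : Antitone b) (hb0 : ∀ i, 0 ≤ b i) (hD0 : ∀ i j, 0 ≤ D i j)
    (hrow : ∀ i, ∑ j, D i j ≤ 1) (hcol : ∀ j, ∑ i, D i j ≤ 1) :
    ∑ i, ∑ j, a i * b j * D i j ≤ ∑ i, a i * b i := by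
  have hprefix : ∀ p, ∑ i with i ≤ p, ∑ j, D i j * b j ≤ ∑ i with i ≤ p, b i := by
    intro p
    rw [sum_comm]
    simp_rw [← sum_mul, mul_comm _ (b _)]
    refine sum_mul_le_sum_filter_le hb p (hb0 p) (fun j => sum_nonneg fun i _ => hD0 i j)
      (fun j => (sum_le_sum_of_subset_of_nonneg (filter_subset _ _)
        fun i _ _ => hD0 i j).trans (hcol j)) ?_
    rw [sum_comm]
    simpa using sum_le_sum fun i (_ : i ∈ ({j | j ≤ p} : Finset ι)) => hrow i
  calc ∑ i, ∑ j, a i * b j * D i j = ∑ i, a i * ∑ j, D i j * b j := by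
        simp_rw [mul_sum]
        exact sum_congr rfl fun i _ => sum_congr rfl fun j _ => by ring
    _ ≤ ∑ i, a i * b i := sum_mul_le_sum_mul_of_prefix_sums_le ha ha0 hprefix

end Rearrangement

namespace Matrix

section PartialIsometry

variable {𝕜 : Type*} [RCLike 𝕜] {l m n k : Type*} [Fintype l] [Fintype m] [Fintype n] [Fintype k]

def IsPartialIsometry (C : Matrix m n 𝕜) : Prop := C * Cᴴ * C = C

theorem IsPartialIsometry.conjTranspose {C : Matrix m n 𝕜} (hC : C.IsPartialIsometry) :
    Cᴴ.IsPartialIsometry := by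
  rw [IsPartialIsometry, conjTranspose_conjTranspose]
  calc Cᴴ * C * Cᴴ = (C * Cᴴ * C)ᴴ := by
        simp only [conjTranspose_mul, conjTranspose_conjTranspose, Matrix.mul_assoc]
    _ = Cᴴ := by rw [hC]

theorem IsPartialIsometry.mul_mul [DecidableEq m] [DecidableEq n] {P : Matrix l m 𝕜}
    {C : Matrix m n 𝕜} {Q : Matrix n k 𝕜} (hC : C.IsPartialIsometry) (hP : Pᴴ * P = 1)
    (hQ : Q * Qᴴ = 1) : (P * C * Q).IsPartialIsometry := by
  calc P * C * Q * (P * C * Q)ᴴ * (P * C * Q) = P * C * (Q * Qᴴ) * Cᴴ * (Pᴴ * P) * C * Q := by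
        simp only [conjTranspose_mul, Matrix.mul_assoc]
    _ = P * (C * Cᴴ * C) * Q := by simp only [hP, hQ, Matrix.mul_one, Matrix.mul_assoc]
    _ = P * C * Q := by rw [hC]

theorem isPartialIsometry_of_mem_unitaryGroup [DecidableEq n] {U : Matrix n n 𝕜}
    (hU : U ∈ unitaryGroup n 𝕜) : U.IsPartialIsometry := by
  rw [IsPartialIsometry, ← star_eq_conjTranspose, mem_unitaryGroup_iff.mp hU, Matrix.one_mul]

theorem IsPartialIsometry.sum_norm_sq_col_le_one {C : Matrix m n 𝕜} (hC : C.IsPartialIsometry)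
    (j : n) : ∑ i, ‖C i j‖ ^ 2 ≤ 1 := by
  have hidem : (1 - Cᴴ * C)ᴴ * (1 - Cᴴ * C) = 1 - Cᴴ * C := by
    rw [conjTranspose_sub, conjTranspose_one, conjTranspose_mul, conjTranspose_conjTranspose,
      sub_mul, mul_sub, mul_sub, Matrix.one_mul, Matrix.mul_one, Matrix.one_mul,
      Matrix.mul_assoc Cᴴ C, ← Matrix.mul_assoc C, hC]
    abel
  have hdiag := (hidem ▸ posSemidef_conjTranspose_mul_self (1 - Cᴴ * C)).diag_nonneg (i := j)
  have hsum : (Cᴴ * C) j j = ((∑ i, ‖C i j‖ ^ 2 : ℝ) : 𝕜) := by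
    simp [mul_apply, RCLike.conj_mul]
  rwa [sub_apply, one_apply_eq, hsum, ← RCLike.ofReal_one, ← RCLike.ofReal_sub,
    RCLike.ofReal_nonneg, sub_nonneg] at hdiag

theorem IsPartialIsometry.sum_norm_sq_row_le_one {C : Matrix m n 𝕜} (hC : C.IsPartialIsometry)
    (i : m) : ∑ j, ‖C i j‖ ^ 2 ≤ 1 := by
  simpa using hC.conjTranspose.sum_norm_sq_col_le_one i

end PartialIsometry

end Matrix

section SquareRoot

variable {ι : Type*} [Fintype ι] [DecidableEq ι]

open scoped MatrixOrder in
theorem psdSqrt_eq_cfcSqrt {M : Matrix ι ι ℂ} (hM : M.PosSemidef) : psdSqrt M = CFC.sqrt M := by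
  rw [CFC.sqrt_eq_cfc, cfc_nnreal_eq_real _ M, hM.1.cfc_eq, psdSqrt, dif_pos hM]
  simp only [IsHermitian.cfc, Unitary.conjStarAlgAut_apply, Real.coe_sqrt, Real.coe_toNNReal']
  congr 3
  funext i
  simp [max_eq_left (hM.eigenvalues_nonneg i)]

open scoped MatrixOrder in
theorem psdSqrt_mul_self {S : Matrix ι ι ℂ} (hS : S.PosSemidef) : psdSqrt (S * S) = S := by
  rw [psdSqrt_eq_cfcSqrt (by simpa [sq] using hS.pow 2), CFC.sqrt_mul_self S hS.nonneg]

theorem trNorm_of_posSemidef {A : Matrix ι ι ℂ} (hA : A.PosSemidef) : trNorm A = A.trace.re := by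
  rw [trNorm, hA.1.eq, psdSqrt_mul_self hA]

theorem trace_mul_mul_conjTranspose_of_mem_unitaryGroup {U : Matrix ι ι ℂ}
    (hU : U ∈ unitaryGroup ι ℂ) (M : Matrix ι ι ℂ) : (U * M * Uᴴ).trace = M.trace := by
  rw [trace_mul_comm, ← Matrix.mul_assoc, ← star_eq_conjTranspose, mem_unitaryGroup_iff'.mp hU,
    Matrix.one_mul]

theorem mul_diagonal_mul_conjTranspose_mul_mul_diagonal_mul_conjTranspose {U : Matrix ι ι ℂ}
    (hU : U ∈ unitaryGroup ι ℂ) (c d : ι → ℂ) :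
    U * diagonal c * Uᴴ * (U * diagonal d * Uᴴ) = U * diagonal (c * d) * Uᴴ := by
  calc _ = U * diagonal c * (Uᴴ * U) * diagonal d * Uᴴ := by simp only [Matrix.mul_assoc]
    _ = _ := by
      rw [← star_eq_conjTranspose, mem_unitaryGroup_iff'.mp hU, Matrix.mul_one, Matrix.mul_assoc U,
        diagonal_mul_diagonal]
      rfl

theorem psdSqrt_mul_diagonal_mul_conjTranspose {U : Matrix ι ι ℂ} (hU : U ∈ unitaryGroup ι ℂ)
    {c : ι → ℝ} (hc : ∀ i, 0 ≤ c i) :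
    psdSqrt (U * diagonal (fun i => (c i : ℂ)) * Uᴴ)
      = U * diagonal (fun i => (√(c i) : ℂ)) * Uᴴ := by
  have hS : (U * diagonal (fun i => (√(c i) : ℂ)) * Uᴴ).PosSemidef :=
    (posSemidef_diagonal_iff.mpr fun i => by simp).mul_mul_conjTranspose_same U
  have hsq : (fun i => (√(c i) : ℂ)) * (fun i => (√(c i) : ℂ)) = fun i => (c i : ℂ) := by
    funext i
    rw [Pi.mul_apply, ← Complex.ofReal_mul, Real.mul_self_sqrt (hc i)]
  rw [← psdSqrt_mul_self hS, mul_diagonal_mul_conjTranspose_mul_mul_diagonal_mul_conjTranspose hU,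
    hsq]

-- With `A Aᴴ = W T Wᴴ` diagonalised, `C = Aᴴ W T^(-1/2) Wᴴ` works (using `0⁻¹ = 0`).
theorem exists_isPartialIsometry_psdSqrt_eq_mul (A : Matrix ι ι ℂ) :
    ∃ C : Matrix ι ι ℂ, C.IsPartialIsometry ∧ psdSqrt (A * Aᴴ) = A * C := by
  have hM := posSemidef_self_mul_conjTranspose A
  set t := hM.1.eigenvalues
  set Φ := Unitary.conjStarAlgAut ℂ (Matrix ι ι ℂ) hM.1.eigenvectorUnitary
  set R : Matrix ι ι ℂ := diagonal fun k => (((√(t k))⁻¹ : ℝ) : ℂ)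
  have hspec : A * Aᴴ = Φ (diagonal fun k => (t k : ℂ)) := hM.1.spectral_theorem
  have hsqrt : psdSqrt (A * Aᴴ) = Φ (diagonal fun k => (√(t k) : ℂ)) := by
    rw [psdSqrt, dif_pos hM]
    rfl
  have hRstar : (Φ R)ᴴ = Φ R := by
    rw [← star_eq_conjTranspose, ← map_star, star_eq_conjTranspose, diagonal_conjTranspose]
    simp [R]
  refine ⟨Aᴴ * Φ R, ?_, ?_⟩
  · have hdiag : R * R * (diagonal fun k => (t k : ℂ)) * R = R := by
      simp only [R, diagonal_mul_diagonal]
      congr 1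
      funext k
      have h0 : 0 ≤ t k := hM.eigenvalues_nonneg k
      norm_cast
      rcases h0.eq_or_lt with h | h
      · simp [← h]
      · have := Real.sqrt_pos.mpr h
        field_simp
        exact (Real.sq_sqrt h0).symm
    rw [IsPartialIsometry, conjTranspose_mul, conjTranspose_conjTranspose, hRstar]
    calc Aᴴ * Φ R * (Φ R * A) * (Aᴴ * Φ R) = Aᴴ * (Φ R * Φ R * (A * Aᴴ) * Φ R) := by
          simp only [Matrix.mul_assoc]
      _ = Aᴴ * Φ R := by rw [hspec, ← map_mul, ← map_mul, ← map_mul, hdiag]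
  · have hdiag : (diagonal fun k => (t k : ℂ)) * R = diagonal fun k => (√(t k) : ℂ) := by
      simp only [R, diagonal_mul_diagonal]
      congr 1
      funext k
      rw [← Complex.ofReal_mul, ← div_eq_mul_inv, Real.div_sqrt]
    rw [hsqrt, ← Matrix.mul_assoc, hspec, ← map_mul, hdiag]

end SquareRoot

section TraceNorm

theorem Matrix.IsPartialIsometry.re_trace_diagonal_mul_diagonal_mul_le {ι : Type*} [Fintype ι]
    [LinearOrder ι] {a b : ι → ℝ} (ha : Antitone a) (ha0 : ∀ i, 0 ≤ a i) (hb : Antitone b)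
    (hb0 : ∀ i, 0 ≤ b i) {X Y : Matrix ι ι ℂ} (hX : X.IsPartialIsometry)
    (hY : Y.IsPartialIsometry) :
    (diagonal (fun i => (a i : ℂ)) * X * diagonal (fun i => (b i : ℂ)) * Y).trace.re
      ≤ ∑ i, a i * b i := by
  have htrace : (diagonal (fun i => (a i : ℂ)) * X * diagonal (fun i => (b i : ℂ)) * Y).trace
      = ∑ i, ∑ j, ((a i * b j : ℝ) : ℂ) * (X i j * Y j i) := by
    simp only [trace, diag_apply, mul_apply (N := Y), mul_diagonal, diagonal_mul]
    exact Finset.sum_congr rfl fun i _ => Finset.sum_congr rfl fun j _ => by push_cast; ring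
  have hentry : ∀ i j, (X i j * Y j i).re ≤ (‖X i j‖ ^ 2 + ‖Y j i‖ ^ 2) / 2 := fun i j =>
    calc (X i j * Y j i).re ≤ ‖X i j‖ * ‖Y j i‖ := by rw [← norm_mul]; exact Complex.re_le_norm _
      _ ≤ (‖X i j‖ ^ 2 + ‖Y j i‖ ^ 2) / 2 := by nlinarith [two_mul_le_add_sq ‖X i j‖ ‖Y j i‖]
  calc _ = ∑ i, ∑ j, a i * b j * (X i j * Y j i).re := by
        simp only [htrace, Complex.re_sum, Complex.re_ofReal_mul]
    _ ≤ ∑ i, ∑ j, a i * b j * ((‖X i j‖ ^ 2 + ‖Y j i‖ ^ 2) / 2) := by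
        gcongr with i _ j _
        · exact mul_nonneg (ha0 i) (hb0 j)
        · exact hentry i j
    _ ≤ ∑ i, a i * b i := by
        refine sum_sum_mul_mul_le_sum_mul ha ha0 hb hb0 (fun i j => by positivity)
          (fun i => ?_) (fun j => ?_)
        · rw [← Finset.sum_div, Finset.sum_add_distrib]
          linarith [hX.sum_norm_sq_row_le_one i, hY.sum_norm_sq_col_le_one i]
        · rw [← Finset.sum_div, Finset.sum_add_distrib]
          linarith [hX.sum_norm_sq_col_le_one j, hY.sum_norm_sq_row_le_one j]

theorem trNorm_mul_le_sum_mul {ι : Type*} [Fintype ι] [LinearOrder ι] {U V : Matrix ι ι ℂ}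
    (hU : U ∈ unitaryGroup ι ℂ) (hV : V ∈ unitaryGroup ι ℂ) {a b : ι → ℝ} (ha : Antitone a)
    (ha0 : ∀ i, 0 ≤ a i) (hb : Antitone b) (hb0 : ∀ i, 0 ≤ b i) :
    trNorm (U * diagonal (fun i => (a i : ℂ)) * Uᴴ * (V * diagonal (fun i => (b i : ℂ)) * Vᴴ))
      ≤ ∑ i, a i * b i := by
  set A := U * diagonal (fun i => (a i : ℂ)) * Uᴴ * (V * diagonal (fun i => (b i : ℂ)) * Vᴴ)
  obtain ⟨C, hC, hpolar⟩ := exists_isPartialIsometry_psdSqrt_eq_mul A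
  have hAC : A * C = U * (diagonal (fun i => (a i : ℂ)) * (Uᴴ * V) *
      diagonal (fun i => (b i : ℂ)) * (Vᴴ * C * U)) * Uᴴ := by
    simp only [A, Matrix.mul_assoc, ← star_eq_conjTranspose, mem_unitaryGroup_iff.mp hU,
      Matrix.mul_one]
  have hUV : (Uᴴ * V).IsPartialIsometry :=
    isPartialIsometry_of_mem_unitaryGroup (mul_mem (Unitary.star_mem hU) hV)
  have hVCU : (Vᴴ * C * U).IsPartialIsometry := hC.mul_mul
    (by rw [conjTranspose_conjTranspose, ← star_eq_conjTranspose, mem_unitaryGroup_iff.mp hV])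
    (by rw [← star_eq_conjTranspose, mem_unitaryGroup_iff.mp hU])
  rw [trNorm, hpolar, hAC, trace_mul_mul_conjTranspose_of_mem_unitaryGroup hU]
  exact hUV.re_trace_diagonal_mul_diagonal_mul_le ha ha0 hb hb0 hVCU

theorem trNorm_mul_eq_sum_mul {ι : Type*} [Fintype ι] [DecidableEq ι] {V : Matrix ι ι ℂ}
    (hV : V ∈ unitaryGroup ι ℂ) {a b : ι → ℝ} (ha0 : ∀ i, 0 ≤ a i) (hb0 : ∀ i, 0 ≤ b i) :
    trNorm (V * diagonal (fun i => (a i : ℂ)) * Vᴴ * (V * diagonal (fun i => (b i : ℂ)) * Vᴴ))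
      = ∑ i, a i * b i := by
  have hpsd : (V * diagonal ((fun i => (a i : ℂ)) * (fun i => (b i : ℂ))) * Vᴴ).PosSemidef :=
    (posSemidef_diagonal_iff.mpr fun i => by
      simpa [← Complex.ofReal_mul] using mul_nonneg (ha0 i) (hb0 i)).mul_mul_conjTranspose_same V
  rw [mul_diagonal_mul_conjTranspose_mul_mul_diagonal_mul_conjTranspose hV,
    trNorm_of_posSemidef hpsd, trace_mul_mul_conjTranspose_of_mem_unitaryGroup hV, trace_diagonal,
    Complex.re_sum]
  simp

end TraceNorm

section OrthonormalFamily

variable {ι : Type*} [Fintype ι] [DecidableEq ι]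

theorem sum_smul_vecMulVec_star_eq (u : ι → ι → ℂ) (c : ι → ℂ) :
    ∑ i, c i • vecMulVec (u i) (star (u i)) = (of u)ᵀ * diagonal c * (of u)ᵀᴴ := by
  ext a b
  simp only [Matrix.sum_apply, Matrix.smul_apply, vecMulVec_apply, mul_apply (N := (of u)ᵀᴴ),
    mul_diagonal, transpose_apply, conjTranspose_apply, of_apply, Pi.star_apply, smul_eq_mul]
  exact Finset.sum_congr rfl fun i _ => by ring

theorem transpose_of_mem_unitaryGroup {u : ι → ι → ℂ}
    (hu : ∀ i i', star (u i) ⬝ᵥ u i' = if i = i' then 1 else 0) :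
    (of u)ᵀ ∈ unitaryGroup ι ℂ := by
  rw [mem_unitaryGroup_iff']
  ext i i'
  simpa [mul_apply, dotProduct, one_apply] using hu i i'

end OrthonormalFamily

theorem fidelity_ordering_general {n : ℕ}
    (ρ σ : Matrix (Fin n) (Fin n) ℂ)
    (r s : Fin n → ℝ) (u v : Fin n → Fin n → ℂ)
    (hu : ∀ i i', star (u i) ⬝ᵥ u i' = if i = i' then 1 else 0)
    (hv : ∀ i i', star (v i) ⬝ᵥ v i' = if i = i' then 1 else 0)
    (hρdec : ρ = ∑ i, ((r i : ℝ) : ℂ) • vecMulVec (u i) (star (u i)))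
    (hσdec : σ = ∑ i, ((s i : ℝ) : ℂ) • vecMulVec (v i) (star (v i)))
    (hrmono : Antitone r) (hsmono : Antitone s)
    (hrnn : ∀ i, 0 ≤ r i) (hsnn : ∀ i, 0 ≤ s i) :
    trNorm (psdSqrt ρ * psdSqrt σ) ≤ ∑ i, Real.sqrt (r i * s i) ∧
    trNorm (psdSqrt (∑ i, ((r i : ℝ) : ℂ) • vecMulVec (v i) (star (v i))) * psdSqrt σ)
      = ∑ i, Real.sqrt (r i * s i) := by
  have hU := transpose_of_mem_unitaryGroup hu
  have hV := transpose_of_mem_unitaryGroup hv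
  simp only [hρdec, hσdec, sum_smul_vecMulVec_star_eq,
    psdSqrt_mul_diagonal_mul_conjTranspose hU hrnn, psdSqrt_mul_diagonal_mul_conjTranspose hV hrnn,
    psdSqrt_mul_diagonal_mul_conjTranspose hV hsnn, Real.sqrt_mul (hrnn _)]
  exact ⟨trNorm_mul_le_sum_mul hU hV (Real.sqrt_monotone.comp_antitone hrmono)
      (fun _ => Real.sqrt_nonneg _) (Real.sqrt_monotone.comp_antitone hsmono)
      (fun _ => Real.sqrt_nonneg _),
    trNorm_mul_eq_sum_mul hV (fun _ => Real.sqrt_nonneg _) fun _ => Real.sqrt_nonneg _⟩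

/-- Fidelity ordering lemma: for PSD matrices `ρ, σ` with non-increasingly ordered
eigenvalues `r_i`, `s_i`, one has `‖√ρ√σ‖₁ ≤ Σ_i √(r_i s_i)`, with equality when
`ρ` is replaced by `ρ̃ = Σ_i r_i|v_i⟩⟨v_i|` diagonal in the eigenbasis of `σ`. -/
theorem fidelity_ordering {n : ℕ}
    (ρ σ : Matrix (Fin n) (Fin n) ℂ) (hρ : ρ.PosSemidef) (hσ : σ.PosSemidef)
    (r s : Fin n → ℝ) (u v : Fin n → Fin n → ℂ)
    (hu : ∀ i i', star (u i) ⬝ᵥ u i' = if i = i' then 1 else 0)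
    (hv : ∀ i i', star (v i) ⬝ᵥ v i' = if i = i' then 1 else 0)
    (hρdec : ρ = ∑ i, ((r i : ℝ) : ℂ) • vecMulVec (u i) (star (u i)))
    (hσdec : σ = ∑ i, ((s i : ℝ) : ℂ) • vecMulVec (v i) (star (v i)))
    (hrmono : Antitone r) (hsmono : Antitone s)
    (hrnn : ∀ i, 0 ≤ r i) (hsnn : ∀ i, 0 ≤ s i) :
    trNorm (psdSqrt ρ * psdSqrt σ) ≤ ∑ i, Real.sqrt (r i * s i) ∧
    trNorm (psdSqrt (∑ i, ((r i : ℝ) : ℂ) • vecMulVec (v i) (star (v i))) * psdSqrt σ)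
      = ∑ i, Real.sqrt (r i * s i) :=
  fidelity_ordering_general ρ σ r s u v hu hv hρdec hσdec hrmono hsmono hrnn hsnn
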